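/- arXiv:2410.08198 — 4 statements merged into one kernel-verified Lean document; each statement's English description precedes it below -/
import Mathlib

section
/- For any 0 < β₂ < 1 and scalar sequences {v_t}_{t=0}^T, {g_t}_{t=1}^T with v₀ ≥ 0, v₁ > 0, and v_t - β₂ v_{t-1} ≥ (1-β₂) g_t² for all t ≥ 1, it holds that ∑_{t=1}^T g_t²/v_t ≤ T + (β₂/(1-β₂)) · ln(v_T/v₀) (when v₀ > 0). -/
/-- logarithmic bound on the sum of normalized squared gradients. -/
theorem stmt_0 (T : ℕ) (β₂ : ℝ) (hβ₂ : 0 < β₂ ∧ β₂ < 1)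
    (v g : ℕ → ℝ) (hv0 : 0 < v 0) (hv1 : 0 < v 1)
    (hrec : ∀ t, 1 ≤ t → v t - β₂ * v (t - 1) ≥ (1 - β₂) * (g t) ^ 2) :
    ∑ t ∈ Finset.Icc 1 T, (g t) ^ 2 / v t ≤
      (T : ℝ) + β₂ / (1 - β₂) * Real.log (v T / v 0) := by
  obtain ⟨hb0, hb1⟩ := hβ₂
  have h1b : 0 < 1 - β₂ := by linarith
  have hc : 0 ≤ β₂ / (1 - β₂) := div_nonneg hb0.le h1b.le
  have vpos : ∀ t, 0 < v t := by
    intro t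
    induction t with
    | zero => exact hv0
    | succ n ih =>
      have h := hrec (n + 1) (by omega)
      simp only [Nat.add_sub_cancel] at h
      nlinarith [sq_nonneg (g (n + 1))]
  have key : ∀ t, 1 ≤ t →
      (g t) ^ 2 / v t ≤ 1 + β₂ / (1 - β₂) * Real.log (v t / v (t - 1)) := by
    intro t ht
    have ha := vpos (t - 1)
    have hb := vpos t
    have hr := hrec t ht
    have hlog : Real.log (v (t - 1) / v t) ≤ v (t - 1) / v t - 1 :=
      Real.log_le_sub_one_of_pos (div_pos ha hb)
    have hlog2 : 1 - v (t - 1) / v t ≤ Real.log (v t / v (t - 1)) := by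
      rw [Real.log_div hb.ne' ha.ne']
      rw [Real.log_div ha.ne' hb.ne'] at hlog
      linarith
    have key2 : (g t) ^ 2 / v t ≤ (v t - β₂ * v (t - 1)) / ((1 - β₂) * v t) := by
      rw [div_le_div_iff₀ hb (mul_pos h1b hb)]
      nlinarith
    have key3 : (v t - β₂ * v (t - 1)) / ((1 - β₂) * v t)
        = 1 + β₂ / (1 - β₂) * (1 - v (t - 1) / v t) := by
      field_simp
      ring
    have := mul_le_mul_of_nonneg_left hlog2 hc
    linarith [key2, key3 ▸ key2]
  induction T with
  | zero => simp [hv0.ne']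
  | succ n ih =>
    rw [Finset.sum_Icc_succ_top (by omega)]
    have hk := key (n + 1) (by omega)
    simp only [Nat.add_sub_cancel] at hk
    have hlogadd : Real.log (v (n + 1) / v 0)
        = Real.log (v n / v 0) + Real.log (v (n + 1) / v n) := by
      rw [Real.log_div (vpos _).ne' hv0.ne', Real.log_div (vpos _).ne' hv0.ne',
        Real.log_div (vpos _).ne' (vpos _).ne']
      ring
    push_cast
    rw [hlogadd, mul_add]
    linarith
end

section
/- Let L : ℝ^d → ℝ be H-smooth with respect to the ℓ∞ norm and bounded below. If SignGD is run for T steps with the step size η = √(2(L(x₀) - inf L)/(TH)), then min_{0 ≤ t < T} ‖∇L(x_t)‖₁ ≤ √(2H(L(x₀) - inf L)/T). -/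
/-!
H-smoothness with respect to `ℓ∞` gives the descent inequality
`L y ≤ L x + ⟪∇L x, y - x⟫ + H/2 ‖y - x‖∞²`. A SignGD step moves by `Δx` with
`⟪∇L x, Δx⟫ = -η ‖∇L x‖₁` and `‖Δx‖∞ ≤ η`, so every step decreases `L` by at least
`η ‖∇L(x_t)‖₁ - H η²/2`. Summing over `T` steps and using `L ≥ inf L` bounds the average, hence
the minimum, of `‖∇L(x_t)‖₁` by `(L x₀ - inf L)/(T η) + H η/2`, and the chosen `η` balances the two
terms. When `L x₀ = inf L` the step size is `0`, but then `x₀` is a minimizer and `∇L x₀ = 0`.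
-/

theorem le_add_fderiv_add_sq_of_norm_sub_le {E : Type*} [NormedAddCommGroup E] [NormedSpace ℝ E]
    {f : E → ℝ} {f' : E → E →L[ℝ] ℝ} {H : ℝ} (hf : ∀ x, HasFDerivAt f (f' x) x)
    (hf' : ∀ x y, ‖f' x - f' y‖ ≤ H * ‖x - y‖) (x y : E) :
    f y ≤ f x + f' x (y - x) + H / 2 * ‖y - x‖ ^ 2 := by
  set v := y - x
  let g : ℝ → ℝ := fun s => f (x + s • v) - (s * f' x v + H / 2 * ‖v‖ ^ 2 * s ^ 2)
  have hg : ∀ s, HasDerivAt g (f' (x + s • v) v - f' x v - H * ‖v‖ ^ 2 * s) s := by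
    intro s
    have hline : HasDerivAt (fun s : ℝ => x + s • v) v s := by
      simpa using ((hasDerivAt_id s).smul_const v).const_add x
    refine (((hf _).comp_hasDerivAt s hline).sub (((hasDerivAt_id s).mul_const (f' x v)).add
      ((hasDerivAt_pow 2 s).const_mul (H / 2 * ‖v‖ ^ 2)))).congr_deriv ?_
    simp only [one_mul, Nat.cast_ofNat, Nat.add_one_sub_one, pow_one]; ring
  have hg_nonpos : ∀ s, 0 ≤ s → f' (x + s • v) v - f' x v ≤ H * ‖v‖ ^ 2 * s := fun s hs =>
    calc f' (x + s • v) v - f' x v = (f' (x + s • v) - f' x) v := rfl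
      _ ≤ ‖f' (x + s • v) - f' x‖ * ‖v‖ :=
        (le_abs_self _).trans ((f' (x + s • v) - f' x).le_opNorm v)
      _ ≤ H * ‖s • v‖ * ‖v‖ := by
        gcongr
        simpa using hf' (x + s • v) x
      _ = H * ‖v‖ ^ 2 * s := by rw [norm_smul, Real.norm_of_nonneg hs]; ring
  have hanti : AntitoneOn g (Set.Ici 0) :=
    antitoneOn_of_hasDerivWithinAt_nonpos (convex_Ici 0)
      (fun s _ => (hg s).continuousAt.continuousWithinAt) (fun s _ => (hg s).hasDerivWithinAt)
      (fun s hs => sub_nonpos.2 (hg_nonpos s (interior_subset hs)))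
  have h01 := hanti Set.self_mem_Ici (Set.mem_Ici.2 zero_le_one) zero_le_one
  simp only [g, v, one_smul, zero_smul, add_zero, add_sub_cancel, one_pow, zero_mul, one_mul,
    sub_zero, zero_pow two_ne_zero, mul_zero] at h01
  linarith

theorem Real.sign_mul_self_eq_abs (r : ℝ) : Real.sign r * r = |r| := by
  rcases lt_trichotomy r 0 with h | rfl | h
  · rw [Real.sign_of_neg h, abs_of_neg h, neg_one_mul]
  · simp
  · rw [Real.sign_of_pos h, abs_of_pos h, one_mul]

theorem Real.abs_sign_le_one (r : ℝ) : |Real.sign r| ≤ 1 := by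
  rcases Real.sign_apply_eq r with h | h | h <;> simp [h]

section Coordinates

variable {ι : Type*} [Fintype ι]

theorem sum_smul_proj_apply (c v : ι → ℝ) :
    (∑ i, c i • ContinuousLinearMap.proj i : (ι → ℝ) →L[ℝ] ℝ) v = ∑ i, c i * v i := by
  simp

theorem sum_smul_proj_sub_sum_smul_proj (a b : ι → ℝ) :
    (∑ i, a i • ContinuousLinearMap.proj i : (ι → ℝ) →L[ℝ] ℝ) -
      ∑ i, b i • ContinuousLinearMap.proj i = ∑ i, (a i - b i) • ContinuousLinearMap.proj i := by
  rw [← Finset.sum_sub_distrib]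
  exact Finset.sum_congr rfl fun i _ => (sub_smul _ _ _).symm

theorem norm_sum_smul_proj_le (c : ι → ℝ) :
    ‖(∑ i, c i • ContinuousLinearMap.proj i : (ι → ℝ) →L[ℝ] ℝ)‖ ≤ ∑ i, |c i| := by
  refine ContinuousLinearMap.opNorm_le_bound _ (by positivity) fun v => ?_
  rw [sum_smul_proj_apply, Finset.sum_mul]
  refine (Finset.abs_sum_le_sum_abs _ _).trans (Finset.sum_le_sum fun i _ => ?_)
  rw [abs_mul]
  exact mul_le_mul_of_nonneg_left (norm_le_pi_norm v i) (abs_nonneg _)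

theorem eq_zero_of_sum_smul_proj_eq_zero {c : ι → ℝ}
    (h : (∑ i, c i • ContinuousLinearMap.proj i : (ι → ℝ) →L[ℝ] ℝ) = 0) : c = 0 := by
  classical
  ext i
  simpa [sum_smul_proj_apply, Pi.single_apply] using congrArg (· (Pi.single i 1)) h

end Coordinates

theorem sum_range_le_sub_add_of_le_sub_add {f a : ℕ → ℝ} {c : ℝ}
    (h : ∀ t, f (t + 1) ≤ f t - a t + c) (T : ℕ) :
    ∑ t ∈ Finset.range T, a t ≤ f 0 - f T + T * c := by
  induction T with
  | zero => simp
  | succ T ih =>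
    rw [Finset.sum_range_succ, Nat.cast_succ]
    linarith [h T]

section SignGD

variable {ι : Type*} [Fintype ι] {L : (ι → ℝ) → ℝ} {grad : (ι → ℝ) → ι → ℝ} {H : ℝ}

theorem le_add_sum_mul_add_sq_of_l1_smooth
    (hderiv : ∀ x, HasFDerivAt L
      (∑ i, grad x i • (ContinuousLinearMap.proj i : (ι → ℝ) →L[ℝ] ℝ)) x)
    (hsmooth : ∀ x y, ∑ i, |grad x i - grad y i| ≤ H * ‖x - y‖) (x y : ι → ℝ) :
    L y ≤ L x + ∑ i, grad x i * (y i - x i) + H / 2 * ‖y - x‖ ^ 2 := by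
  have hlip : ∀ x y, ‖(∑ i, grad x i • ContinuousLinearMap.proj i : (ι → ℝ) →L[ℝ] ℝ) -
      ∑ i, grad y i • ContinuousLinearMap.proj i‖ ≤ H * ‖x - y‖ := fun x y => by
    rw [sum_smul_proj_sub_sum_smul_proj]
    exact (norm_sum_smul_proj_le _).trans (hsmooth x y)
  simpa only [sum_smul_proj_apply, Pi.sub_apply] using
    le_add_fderiv_add_sq_of_norm_sub_le hderiv hlip x y

theorem signGD_step_le
    (hderiv : ∀ x, HasFDerivAt L
      (∑ i, grad x i • (ContinuousLinearMap.proj i : (ι → ℝ) →L[ℝ] ℝ)) x)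
    (hsmooth : ∀ x y, ∑ i, |grad x i - grad y i| ≤ H * ‖x - y‖) (hH : 0 ≤ H)
    {η : ℝ} (hη : 0 ≤ η) {x x' : ι → ℝ} (hx' : ∀ i, x' i = x i - η * Real.sign (grad x i)) :
    L x' ≤ L x - η * ∑ i, |grad x i| + H / 2 * η ^ 2 := by
  have hinner : ∑ i, grad x i * (x' i - x i) = -(η * ∑ i, |grad x i|) := by
    simp_rw [hx', ← Real.sign_mul_self_eq_abs, Finset.mul_sum, ← Finset.sum_neg_distrib]
    exact Finset.sum_congr rfl fun i _ => by ring
  have hnorm : ‖x' - x‖ ≤ η := (pi_norm_le_iff_of_nonneg hη).2 fun i => by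
    rw [Pi.sub_apply, hx', sub_sub_cancel_left, norm_neg, norm_mul, Real.norm_of_nonneg hη]
    exact mul_le_of_le_one_right hη (Real.abs_sign_le_one _)
  calc L x' ≤ L x + ∑ i, grad x i * (x' i - x i) + H / 2 * ‖x' - x‖ ^ 2 :=
        le_add_sum_mul_add_sq_of_l1_smooth hderiv hsmooth x x'
    _ ≤ L x - η * ∑ i, |grad x i| + H / 2 * η ^ 2 := by
        rw [hinner, ← sub_eq_add_neg]
        gcongr

theorem signGD_exists_l1_le
    (hderiv : ∀ x, HasFDerivAt L
      (∑ i, grad x i • (ContinuousLinearMap.proj i : (ι → ℝ) →L[ℝ] ℝ)) x)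
    (hsmooth : ∀ x y, ∑ i, |grad x i - grad y i| ≤ H * ‖x - y‖) (hH : 0 ≤ H)
    (hbdd : BddBelow (Set.range L)) {η : ℝ} (hη : 0 < η) {x : ℕ → ι → ℝ}
    (hupd : ∀ t i, x (t + 1) i = x t i - η * Real.sign (grad (x t) i)) {T : ℕ} (hT : 0 < T) :
    ∃ t < T, ∑ i, |grad (x t) i| ≤
      (L (x 0) - sInf (Set.range L)) / (T * η) + H * η / 2 := by
  have htele := sum_range_le_sub_add_of_le_sub_add (f := L ∘ x)
    (fun t => signGD_step_le hderiv hsmooth hH hη.le (hupd t)) T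
  have hlow : sInf (Set.range L) ≤ L (x T) := csInf_le hbdd ⟨_, rfl⟩
  have hT' : (0 : ℝ) < T := Nat.cast_pos.2 hT
  have hsum : ∑ t ∈ Finset.range T, ∑ i, |grad (x t) i| ≤ ∑ _t ∈ Finset.range T,
      ((L (x 0) - sInf (Set.range L)) / (T * η) + H * η / 2) := by
    rw [Finset.sum_const, Finset.card_range, nsmul_eq_mul, ← mul_le_mul_iff_right₀ hη,
      Finset.mul_sum]
    calc _ ≤ L (x 0) - L (x T) + T * (H / 2 * η ^ 2) := htele
      _ ≤ _ := by field_simp; linarith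
  obtain ⟨t, ht, hle⟩ := Finset.exists_le_of_sum_le (Finset.nonempty_range_iff.2 hT.ne') hsum
  exact ⟨t, Finset.mem_range.1 ht, hle⟩

end SignGD

theorem div_mul_sqrt_add_mul_sqrt_div_two {Δ H T : ℝ} (hΔ : 0 < Δ) (hH : 0 < H) (hT : 0 < T) :
    Δ / (T * √(2 * Δ / (T * H))) + H * √(2 * Δ / (T * H)) / 2 = √(2 * H * Δ / T) := by
  set η := √(2 * Δ / (T * H))
  have hη : 0 < η := Real.sqrt_pos.2 (by positivity)
  have hη_sq : η ^ 2 = 2 * Δ / (T * H) := Real.sq_sqrt (by positivity)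
  have hΔ_eq : Δ = T * H * η ^ 2 / 2 := by rw [hη_sq]; field_simp
  calc Δ / (T * η) + H * η / 2 = H * η := by rw [hΔ_eq]; field_simp; ring
    _ = √((H * η) ^ 2) := (Real.sqrt_sq (by positivity)).symm
    _ = √(2 * H * Δ / T) := by rw [mul_pow, hη_sq]; congr 1; field_simp

/-- convergence of SignGD with the optimally tuned step size. -/
theorem stmt_3 (d : ℕ) (x₀ : Fin d → ℝ) (L : (Fin d → ℝ) → ℝ) (grad : (Fin d → ℝ) → (Fin d → ℝ)) (H : ℝ)
    (hH : 0 < H)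
    (hderiv : ∀ x, HasFDerivAt L
      (∑ i, grad x i • (ContinuousLinearMap.proj i : (Fin d → ℝ) →L[ℝ] ℝ)) x)
    (hsmooth : ∀ x y, ∑ i, |grad x i - grad y i| ≤ H * ‖x - y‖)
    (hbdd : BddBelow (Set.range L))
    (T : ℕ) (hT : 0 < T)
    (η : ℝ) (hη : η = Real.sqrt (2 * (L (x₀) - sInf (Set.range L)) / (T * H)))
    (x : ℕ → Fin d → ℝ) (hx0 : x 0 = x₀)
    (hupd : ∀ t, ∀ i, x (t + 1) i = x t i - η * Real.sign (grad (x t) i)) :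
    ∃ t < T, ∑ i, |grad (x t) i| ≤
      Real.sqrt (2 * H * (L x₀ - sInf (Set.range L)) / T) := by
  have hinf_le : ∀ z, sInf (Set.range L) ≤ L z := fun z => csInf_le hbdd ⟨z, rfl⟩
  rcases (sub_nonneg.2 (hinf_le x₀)).eq_or_lt with hΔ | hΔ
  · have hmin : IsLocalMin L x₀ := Filter.Eventually.of_forall fun z => by
      linarith [hinf_le z]
    have hgrad : grad x₀ = 0 :=
      eq_zero_of_sum_smul_proj_eq_zero (hmin.hasFDerivAt_eq_zero (hderiv x₀))
    refine ⟨0, hT, ?_⟩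
    simp only [hx0, hgrad, Pi.zero_apply, abs_zero, Finset.sum_const_zero]
    exact Real.sqrt_nonneg _
  · have hη_pos : 0 < η := hη ▸ Real.sqrt_pos.2 (by positivity)
    obtain ⟨t, ht, hle⟩ := signGD_exists_l1_le hderiv hsmooth hH.le hbdd hη_pos hupd hT
    refine ⟨t, ht, hle.trans_eq ?_⟩
    rw [hx0, hη]
    exact div_mul_sqrt_add_mul_sqrt_div_two hΔ hH (Nat.cast_pos.2 hT)
end

section
/- Let Φ : [d] → [B] be a partition of coordinates into blocks with block sizes d_b, and let L : ℝ^d → ℝ be twice differentiable and H-smooth blockwisely w.r.t. the (∞,2)-norm, i.e., for each block b, √(d_b)·‖∇_{(b)}L(x) - ∇_{(b)}L(y)‖₂ ≤ H_b · max_{b'} ‖(x-y)_{(b')}‖₂/√(d_{b'}) for all x,y. Then for any x and Δ ∈ ℝ^d, Δᵀ∇²L(x)Δ ≤ ∑_{b=1}^B (H_b/d_b)·‖Δ_{(b)}‖₂². -/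
/-- Coordinates belonging to block `b` of the partition `Φ`. -/
def blockIdx {d B : ℕ} (Φ : Fin d → Fin B) (b : Fin B) : Finset (Fin d) :=
  Finset.univ.filter fun i => Φ i = b

/-- The size `d_b` of block `b`, as a real number. -/
noncomputable def dB {d B : ℕ} (Φ : Fin d → Fin B) (b : Fin B) : ℝ :=
  (blockIdx Φ b).card

/-- The `ℓ₂` norm of the restriction of `x` to block `b`. -/
noncomputable def blockNorm {d B : ℕ} (Φ : Fin d → Fin B) (b : Fin B) (x : Fin d → ℝ) : ℝ :=
  Real.sqrt (∑ i ∈ blockIdx Φ b, (x i) ^ 2)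

/-- The `Φ`-norm `‖x‖_Φ = max_b ‖x_{(b)}‖₂ / √(d_b)`. -/
noncomputable def phiNorm {d B : ℕ} (Φ : Fin d → Fin B) (x : Fin d → ℝ) : ℝ :=
  ⨆ b, blockNorm Φ b x / Real.sqrt (dB Φ b)

/-!
With `M = ∇²L(x)` (symmetric), differentiating the smoothness hypothesis gives
`√d_b ‖(M v)_{(b)}‖₂ ≤ H_b ‖v‖_Φ`. Testing this against a norming vector of the dual norm
`w ↦ ∑ b, √d_b ‖w_{(b)}‖₂` and using symmetry of `M` bounds the dual norm of `M u` by
`H_b ‖u_{(b)}‖₂ / √d_b` for `u` supported on block `b`. Expanding `Δᵀ M Δ` over pairs of blocks,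
each cross term is at most a geometric mean of two such quantities, weighted by
`a_b = ‖Δ_{(b)}‖₂ / √d_b`; AM–GM and summation (a Schur test) give the bound.
-/

open Finset Matrix

theorem two_mul_le_add_of_le_mul_of_le_mul {q a a' s s' : ℝ} (ha : 0 ≤ a) (ha' : 0 ≤ a')
    (hs : 0 ≤ s) (hs' : 0 ≤ s') (h : q ≤ a * s') (h' : q ≤ a' * s) :
    2 * q ≤ a * s + a' * s' := by
  rcases le_or_gt q 0 with hq | hq
  · nlinarith [mul_nonneg ha hs, mul_nonneg ha' hs']
  · have hsq : (2 * q) ^ 2 ≤ (a * s + a' * s') ^ 2 := by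
      nlinarith [mul_le_mul h h' hq.le (mul_nonneg ha hs'), sq_nonneg (a * s - a' * s')]
    nlinarith [mul_nonneg ha hs, mul_nonneg ha' hs']

theorem sum_sum_le_of_two_mul_le_add_swap {ι : Type*} [Fintype ι] {q T : ι → ι → ℝ}
    (h : ∀ i j, 2 * q i j ≤ T i j + T j i) :
    ∑ i, ∑ j, q i j ≤ ∑ i, ∑ j, T i j := by
  have hsum := sum_le_sum fun i (_ : i ∈ univ) => sum_le_sum fun j (_ : j ∈ univ) => h i j
  simp only [← mul_sum, sum_add_distrib] at hsum
  rw [sum_comm (f := fun i j => T j i)] at hsum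
  linarith

theorem isSymm_hessian {ι : Type*} [Fintype ι] [DecidableEq ι] {L : (ι → ℝ) → ℝ}
    {grad : (ι → ℝ) → ι → ℝ} {Hess : (ι → ℝ) → Matrix ι ι ℝ}
    (hderiv : ∀ x, HasFDerivAt L
      (∑ i, grad x i • (ContinuousLinearMap.proj i : (ι → ℝ) →L[ℝ] ℝ)) x)
    (hhess : ∀ x, HasFDerivAt grad ((Hess x).mulVecLin.toContinuousLinearMap) x) (x : ι → ℝ) :
    (Hess x).IsSymm := by
  have hgrad := HasFDerivAt.fun_sum (u := univ) fun i _ =>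
    (hasFDerivAt_pi'.1 (hhess x) i).smul_const (ContinuousLinearMap.proj i : (ι → ℝ) →L[ℝ] ℝ)
  refine IsSymm.ext fun i j => ?_
  simpa [Pi.single_apply] using
    (second_derivative_symmetric hderiv hgrad (Pi.single i 1) (Pi.single j 1))

theorem Matrix.IsSymm.dotProduct_mulVec_comm {n : Type*} [Fintype n] {M : Matrix n n ℝ}
    (hM : M.IsSymm) (x y : n → ℝ) : x ⬝ᵥ M *ᵥ y = y ⬝ᵥ M *ᵥ x := by
  rw [dotProduct_mulVec, ← hM.eq, vecMul_transpose, dotProduct_comm, hM.eq]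

section Blocks

variable {d B : ℕ} (Φ : Fin d → Fin B)

def blockProj (b : Fin B) (x : Fin d → ℝ) : Fin d → ℝ := fun i => if Φ i = b then x i else 0

theorem mem_blockIdx {b : Fin B} {i : Fin d} : i ∈ blockIdx Φ b ↔ Φ i = b := by
  simp [blockIdx]

theorem dB_nonneg (b : Fin B) : 0 ≤ dB Φ b := Nat.cast_nonneg _

theorem blockNorm_nonneg (b : Fin B) (x : Fin d → ℝ) : 0 ≤ blockNorm Φ b x := Real.sqrt_nonneg _

theorem blockNorm_sq (b : Fin B) (x : Fin d → ℝ) :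
    blockNorm Φ b x ^ 2 = ∑ i ∈ blockIdx Φ b, x i ^ 2 :=
  Real.sq_sqrt (sum_nonneg fun _ _ => sq_nonneg _)

theorem continuous_blockNorm (b : Fin B) : Continuous (blockNorm Φ b) := by
  unfold blockNorm; fun_prop

theorem blockNorm_smul (b : Fin B) (c : ℝ) (x : Fin d → ℝ) :
    blockNorm Φ b (c • x) = |c| * blockNorm Φ b x := by
  simp only [blockNorm, Pi.smul_apply, smul_eq_mul, mul_pow, ← mul_sum]
  rw [Real.sqrt_mul (sq_nonneg c), Real.sqrt_sq_eq_abs]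

theorem blockNorm_eq_zero_of_dB_eq_zero {b : Fin B} (hb : dB Φ b = 0) (x : Fin d → ℝ) :
    blockNorm Φ b x = 0 := by
  simp_all [blockNorm, dB]

theorem blockNorm_div_sqrt_dB_mul_sqrt_dB (b : Fin B) (x : Fin d → ℝ) :
    blockNorm Φ b x / √(dB Φ b) * √(dB Φ b) = blockNorm Φ b x := by
  rcases (dB_nonneg Φ b).eq_or_lt with h | h
  · simp [blockNorm_eq_zero_of_dB_eq_zero Φ h.symm]
  · exact div_mul_cancel₀ _ (Real.sqrt_pos.2 h).ne'

theorem blockNorm_one (b : Fin B) : blockNorm Φ b 1 = √(dB Φ b) := by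
  simp [blockNorm, dB]

theorem blockNorm_div_le_phiNorm (b : Fin B) (x : Fin d → ℝ) :
    blockNorm Φ b x / √(dB Φ b) ≤ phiNorm Φ x :=
  le_ciSup (f := fun b => blockNorm Φ b x / √(dB Φ b)) (Set.finite_range _).bddAbove b

theorem phiNorm_smul {c : ℝ} (hc : 0 ≤ c) (x : Fin d → ℝ) :
    phiNorm Φ (c • x) = c * phiNorm Φ x := by
  simp only [phiNorm, Real.mul_iSup_of_nonneg hc, blockNorm_smul, abs_of_nonneg hc, mul_div_assoc]

theorem one_le_phiNorm_one {b : Fin B} (hb : 0 < dB Φ b) : 1 ≤ phiNorm Φ 1 := by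
  simpa [blockNorm_one, div_self (Real.sqrt_pos.2 hb).ne'] using blockNorm_div_le_phiNorm Φ b 1

theorem sum_blockProj (x : Fin d → ℝ) : ∑ b, blockProj Φ b x = x := by
  ext i; simp [blockProj, Finset.sum_apply]

theorem blockProj_dotProduct (b : Fin B) (x y : Fin d → ℝ) :
    blockProj Φ b x ⬝ᵥ y = ∑ i ∈ blockIdx Φ b, x i * y i := by
  simp [blockProj, blockIdx, dotProduct, sum_filter, ite_mul]

theorem blockProj_dotProduct_le (b : Fin B) (x y : Fin d → ℝ) :
    blockProj Φ b x ⬝ᵥ y ≤ blockNorm Φ b x * blockNorm Φ b y := by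
  rw [blockProj_dotProduct]
  exact Real.sum_mul_le_sqrt_mul_sqrt _ _ _

theorem dotProduct_mulVec_eq_sum_blockProj (M : Matrix (Fin d) (Fin d) ℝ) (x y : Fin d → ℝ) :
    x ⬝ᵥ M *ᵥ y = ∑ b, ∑ b', blockProj Φ b x ⬝ᵥ M *ᵥ blockProj Φ b' y := by
  conv_lhs => rw [← sum_blockProj Φ x, ← sum_blockProj Φ y]
  simp only [mulVec_sum, dotProduct_sum, sum_dotProduct]
  exact sum_comm

theorem blockNorm_congr {b : Fin B} {x y : Fin d → ℝ} (h : ∀ i ∈ blockIdx Φ b, x i = y i) :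
    blockNorm Φ b x = blockNorm Φ b y := by
  unfold blockNorm; rw [sum_congr rfl fun i hi => by rw [h i hi]]

theorem dotProduct_eq_sum_blockIdx (x y : Fin d → ℝ) :
    x ⬝ᵥ y = ∑ b, ∑ i ∈ blockIdx Φ b, x i * y i := by
  conv_lhs => rw [← sum_blockProj Φ x]
  simp only [sum_dotProduct, blockProj_dotProduct]

theorem phiNorm_le_one {x : Fin d → ℝ} (h : ∀ b, blockNorm Φ b x ≤ √(dB Φ b)) :
    phiNorm Φ x ≤ 1 :=
  Real.iSup_le (fun b => div_le_one_of_le₀ (h b) (Real.sqrt_nonneg _)) zero_le_one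

theorem exists_phiNorm_le_one_dotProduct_eq (w : Fin d → ℝ) :
    ∃ v, phiNorm Φ v ≤ 1 ∧ v ⬝ᵥ w = ∑ b, √(dB Φ b) * blockNorm Φ b w := by
  let c : Fin B → ℝ := fun b => √(dB Φ b) / blockNorm Φ b w
  have hv : ∀ b, ∀ i ∈ blockIdx Φ b, c (Φ i) * w i = (c b • w) i := fun b i hi => by
    rw [(mem_blockIdx Φ).1 hi]; rfl
  refine ⟨fun i => c (Φ i) * w i, phiNorm_le_one Φ fun b => ?_, ?_⟩
  · rw [blockNorm_congr Φ (hv b), blockNorm_smul,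
      abs_of_nonneg (div_nonneg (Real.sqrt_nonneg _) (blockNorm_nonneg Φ b w)),
      div_mul_eq_mul_div, mul_div_assoc]
    exact mul_le_of_le_one_right (Real.sqrt_nonneg _) (div_self_le_one _)
  · rw [dotProduct_eq_sum_blockIdx]
    refine sum_congr rfl fun b _ => ?_
    rw [sum_congr rfl fun i hi => by rw [hv b i hi]]
    simp only [Pi.smul_apply, smul_eq_mul, mul_assoc, ← mul_sum, ← sq, ← blockNorm_sq]
    rw [div_mul_eq_mul_div, mul_div_assoc, sq, mul_self_div_self]

theorem blockNorm_apply_le_of_hasFDerivAt {g : (Fin d → ℝ) → Fin d → ℝ}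
    {g' : (Fin d → ℝ) →L[ℝ] Fin d → ℝ} {x : Fin d → ℝ} (hg : HasFDerivAt g g' x) {b : Fin B}
    {c C : ℝ} (hgC : ∀ y, c * blockNorm Φ b (g y - g x) ≤ C * phiNorm Φ (y - x))
    (v : Fin d → ℝ) : c * blockNorm Φ b (g' v) ≤ C * phiNorm Φ v := by
  have hlim : Filter.Tendsto (fun t : ℝ => c * blockNorm Φ b (t • (g (x + t⁻¹ • v) - g x)))
      Filter.atTop (nhds (c * blockNorm Φ b (g' v))) :=
    (((continuous_blockNorm Φ b).tendsto _).const_mul c).comp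
      (hg.lim v (c := id) tendsto_norm_atTop_atTop)
  refine le_of_tendsto hlim ?_
  filter_upwards [Filter.eventually_gt_atTop 0] with t ht
  calc c * blockNorm Φ b (t • (g (x + t⁻¹ • v) - g x))
      = t * (c * blockNorm Φ b (g (x + t⁻¹ • v) - g x)) := by
        rw [blockNorm_smul, abs_of_pos ht]; ring
    _ ≤ t * (C * phiNorm Φ (t⁻¹ • v)) :=
        mul_le_mul_of_nonneg_left (by simpa using hgC (x + t⁻¹ • v)) ht.le
    _ = C * phiNorm Φ v := by
        rw [phiNorm_smul Φ (inv_nonneg.2 ht.le)]; field_simp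

variable {M : Matrix (Fin d) (Fin d) ℝ} {H : Fin B → ℝ}

theorem sum_sqrt_dB_mul_blockNorm_mulVec_blockProj_le (hM : M.IsSymm)
    (hMH : ∀ v b, √(dB Φ b) * blockNorm Φ b (M *ᵥ v) ≤ H b * phiNorm Φ v) (b : Fin B)
    (u : Fin d → ℝ) :
    ∑ b', √(dB Φ b') * blockNorm Φ b' (M *ᵥ blockProj Φ b u) ≤
      H b * blockNorm Φ b u / √(dB Φ b) := by
  obtain ⟨v, hv, hvw⟩ := exists_phiNorm_le_one_dotProduct_eq Φ (M *ᵥ blockProj Φ b u)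
  rw [← hvw, hM.dotProduct_mulVec_comm]
  refine (blockProj_dotProduct_le Φ b u (M *ᵥ v)).trans ?_
  rcases (dB_nonneg Φ b).eq_or_lt with hb | hb
  · simp [blockNorm_eq_zero_of_dB_eq_zero Φ hb.symm]
  have hsqrt : 0 < √(dB Φ b) := Real.sqrt_pos.2 hb
  have hH : 0 ≤ H b := nonneg_of_mul_nonneg_left
    ((mul_nonneg hsqrt.le (blockNorm_nonneg Φ b _)).trans (hMH 1 b))
    (zero_lt_one.trans_le (one_le_phiNorm_one Φ hb))
  have hMv : blockNorm Φ b (M *ᵥ v) ≤ H b / √(dB Φ b) := by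
    rw [le_div_iff₀' hsqrt]
    exact (hMH v b).trans (mul_le_of_le_one_right hH hv)
  calc blockNorm Φ b u * blockNorm Φ b (M *ᵥ v)
      ≤ blockNorm Φ b u * (H b / √(dB Φ b)) :=
        mul_le_mul_of_nonneg_left hMv (blockNorm_nonneg Φ b u)
    _ = H b * blockNorm Φ b u / √(dB Φ b) := by ring

theorem dotProduct_mulVec_le_of_isSymm (hM : M.IsSymm)
    (hMH : ∀ v b, √(dB Φ b) * blockNorm Φ b (M *ᵥ v) ≤ H b * phiNorm Φ v) (Δ : Fin d → ℝ) :
    Δ ⬝ᵥ M *ᵥ Δ ≤ ∑ b, H b / dB Φ b * blockNorm Φ b Δ ^ 2 := by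
  set a : Fin B → ℝ := fun b => blockNorm Φ b Δ / √(dB Φ b) with ha
  set s : Fin B → Fin B → ℝ :=
    fun b b' => √(dB Φ b') * blockNorm Φ b' (M *ᵥ blockProj Φ b Δ) with hs
  have ha_nonneg b : 0 ≤ a b := div_nonneg (blockNorm_nonneg Φ b Δ) (Real.sqrt_nonneg _)
  have hs_nonneg b b' : 0 ≤ s b b' := mul_nonneg (Real.sqrt_nonneg _) (blockNorm_nonneg Φ b' _)
  have hbound b b' : blockProj Φ b Δ ⬝ᵥ M *ᵥ blockProj Φ b' Δ ≤ a b * s b' b := by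
    calc _ ≤ blockNorm Φ b Δ * blockNorm Φ b (M *ᵥ blockProj Φ b' Δ) :=
          blockProj_dotProduct_le Φ b _ _
      _ = a b * s b' b := by
          rw [ha, hs]; dsimp only
          rw [← mul_assoc, blockNorm_div_sqrt_dB_mul_sqrt_dB]
  have hpair b b' : 2 * (blockProj Φ b Δ ⬝ᵥ M *ᵥ blockProj Φ b' Δ) ≤
      a b * s b b' + a b' * s b' b :=
    two_mul_le_add_of_le_mul_of_le_mul (ha_nonneg b) (ha_nonneg b') (hs_nonneg b b')
      (hs_nonneg b' b) (hbound b b') (hM.dotProduct_mulVec_comm _ _ ▸ hbound b' b)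
  calc Δ ⬝ᵥ M *ᵥ Δ = ∑ b, ∑ b', blockProj Φ b Δ ⬝ᵥ M *ᵥ blockProj Φ b' Δ :=
        dotProduct_mulVec_eq_sum_blockProj Φ M Δ Δ
    _ ≤ ∑ b, a b * ∑ b', s b b' := by
        simp only [mul_sum]; exact sum_sum_le_of_two_mul_le_add_swap hpair
    _ ≤ ∑ b, a b * (H b * blockNorm Φ b Δ / √(dB Φ b)) := by
        gcongr with b
        · exact ha_nonneg b
        · exact sum_sqrt_dB_mul_blockNorm_mulVec_blockProj_le Φ hM hMH b Δ
    _ = ∑ b, H b / dB Φ b * blockNorm Φ b Δ ^ 2 := by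
        refine sum_congr rfl fun b _ => ?_
        calc a b * (H b * blockNorm Φ b Δ / √(dB Φ b))
            = H b / (√(dB Φ b) * √(dB Φ b)) * blockNorm Φ b Δ ^ 2 := by rw [ha]; ring
          _ = H b / dB Φ b * blockNorm Φ b Δ ^ 2 := by rw [Real.mul_self_sqrt (dB_nonneg Φ b)]

end Blocks

theorem stmt_7_general (d B : ℕ) (Φ : Fin d → Fin B)
    (L : (Fin d → ℝ) → ℝ) (grad : (Fin d → ℝ) → (Fin d → ℝ))
    (Hess : (Fin d → ℝ) → Matrix (Fin d) (Fin d) ℝ) (H : Fin B → ℝ)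
    (hderiv : ∀ x, HasFDerivAt L
      (∑ i, grad x i • (ContinuousLinearMap.proj i : (Fin d → ℝ) →L[ℝ] ℝ)) x)
    (hhess : ∀ x, HasFDerivAt grad ((Hess x).mulVecLin.toContinuousLinearMap) x)
    (hsmooth : ∀ b x y, Real.sqrt (dB Φ b) * blockNorm Φ b (grad x - grad y)
      ≤ H b * phiNorm Φ (x - y)) :
    ∀ (x Δ : Fin d → ℝ),
      dotProduct Δ ((Hess x).mulVec Δ) ≤
        ∑ b, H b / dB Φ b * (blockNorm Φ b Δ) ^ 2 := by
  intro x Δ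
  refine dotProduct_mulVec_le_of_isSymm Φ (isSymm_hessian hderiv hhess x) (fun v b => ?_) Δ
  exact blockNorm_apply_le_of_hasFDerivAt Φ (hhess x) (fun y => hsmooth b y x) v

/-- blockwise `(∞,2)`-smoothness bounds the Hessian quadratic form. -/
theorem stmt_7 (d B : ℕ) (Φ : Fin d → Fin B) (hblocks : ∀ b, (blockIdx Φ b).Nonempty)
    (L : (Fin d → ℝ) → ℝ) (grad : (Fin d → ℝ) → (Fin d → ℝ))
    (Hess : (Fin d → ℝ) → Matrix (Fin d) (Fin d) ℝ) (H : Fin B → ℝ)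
    (hderiv : ∀ x, HasFDerivAt L
      (∑ i, grad x i • (ContinuousLinearMap.proj i : (Fin d → ℝ) →L[ℝ] ℝ)) x)
    (hhess : ∀ x, HasFDerivAt grad ((Hess x).mulVecLin.toContinuousLinearMap) x)
    (hsmooth : ∀ b x y, Real.sqrt (dB Φ b) * blockNorm Φ b (grad x - grad y)
      ≤ H b * phiNorm Φ (x - y)) :
    ∀ (x Δ : Fin d → ℝ),
      dotProduct Δ ((Hess x).mulVec Δ) ≤
        ∑ b, H b / dB Φ b * (blockNorm Φ b Δ) ^ 2 :=
  stmt_7_general d B Φ L grad Hess H hderiv hhess hsmooth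
end

section
/- Let g ∈ ℝ^{d_b} be a random vector with E[g] = ḡ and E‖g − ḡ‖₂² ≤ d_bσ². Then E[(√(‖ḡ‖₂²/d_b + σ²) − √(‖g‖₂²/d_b))²] ≤ 2σ·√(‖ḡ‖₂²/d_b + σ²). -/
open MeasureTheory

set_option maxHeartbeats 1000000 in
/-- second-moment control of the mismatch between `√(‖gbar‖²/d_b + σ²)` and
`√(‖g‖²/d_b)` for a random vector `g` with mean `gbar` and coordinate-noise level `σ`. -/
theorem stmt_18 {Ω : Type*} [MeasurableSpace Ω] (P : Measure Ω) [IsProbabilityMeasure P]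
    (db : ℕ) (hdb : 0 < db) (g : Ω → (Fin db → ℝ)) (gbar : Fin db → ℝ) (σ : ℝ) (hσ : 0 ≤ σ)
    (hmeas : ∀ i, Measurable fun ω => g ω i)
    (hint : ∀ i, Integrable (fun ω => g ω i) P)
    (hint2 : Integrable (fun ω => ∑ i, (g ω i) ^ 2) P)
    (hmean : ∀ i, (∫ ω, g ω i ∂P) = gbar i)
    (hnoise : (∫ ω, ∑ i, (g ω i - gbar i) ^ 2 ∂P) ≤ db * σ ^ 2) :
    (∫ ω, (Real.sqrt ((∑ i, (gbar i) ^ 2) / db + σ ^ 2) -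
        Real.sqrt ((∑ i, (g ω i) ^ 2) / db)) ^ 2 ∂P) ≤
      2 * σ * Real.sqrt ((∑ i, (gbar i) ^ 2) / db + σ ^ 2) := by
  classical
  have hdb' : (0:ℝ) < db := by exact_mod_cast hdb
  set b : ℝ := (∑ i, (gbar i) ^ 2) / db with hb
  set a : ℝ := Real.sqrt (b + σ ^ 2) with ha
  have hbnn : 0 ≤ b := by positivity
  have hann : 0 ≤ a := Real.sqrt_nonneg _
  set X : Ω → ℝ := fun ω => Real.sqrt ((∑ i, (g ω i) ^ 2) / db) with hX
  have hXnn : ∀ ω, 0 ≤ X ω := fun ω => Real.sqrt_nonneg _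
  have hXsq : ∀ ω, X ω ^ 2 = (∑ i, (g ω i) ^ 2) / db := by
    intro ω
    rw [hX, Real.sq_sqrt]
    positivity
  have hmeasS : Measurable fun ω => ∑ i, (g ω i) ^ 2 := by
    apply Finset.measurable_sum
    intro i _
    exact (hmeas i).pow_const 2
  have hmeasX : Measurable X :=
    Real.continuous_sqrt.measurable.comp (hmeasS.div_const db)
  have hintXsq : Integrable (fun ω => X ω ^ 2) P := by
    refine (hint2.div_const db).congr (Filter.Eventually.of_forall fun ω => ?_)
    exact (hXsq ω).symm
  have hintX : Integrable X P := by
    refine Integrable.mono' (g := fun ω => (X ω ^ 2 + 1) / 2)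
      ((hintXsq.add (integrable_const 1)).div_const 2)
      hmeasX.aestronglyMeasurable (Filter.Eventually.of_forall fun ω => ?_)
    show ‖X ω‖ ≤ (X ω ^ 2 + 1) / 2
    rw [Real.norm_eq_abs, abs_of_nonneg (hXnn ω)]
    nlinarith [hXnn ω, sq_nonneg (X ω - 1)]
  -- second moment bound
  have hsecond : (∫ ω, ∑ i, (g ω i) ^ 2 ∂P) ≤ (∑ i, (gbar i) ^ 2) + db * σ ^ 2 := by
    have hintgg : Integrable (fun ω => ∑ i, 2 * gbar i * g ω i) P := by
      apply integrable_finset_sum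
      intro i _
      exact (hint i).const_mul _
    have h1 : (∫ ω, ∑ i, 2 * gbar i * g ω i ∂P) = 2 * ∑ i, (gbar i) ^ 2 := by
      rw [integral_finset_sum _ (fun i _ => (hint i).const_mul _)]
      rw [Finset.mul_sum]
      refine Finset.sum_congr rfl fun i _ => ?_
      rw [integral_const_mul, hmean]
      ring
    have hexp : (fun ω => ∑ i, (g ω i - gbar i) ^ 2)
        = fun ω => ((∑ i, (g ω i) ^ 2) - (∑ i, 2 * gbar i * g ω i)) + (∑ i, (gbar i) ^ 2) := by
      funext ω
      rw [← Finset.sum_sub_distrib, ← Finset.sum_add_distrib]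
      refine Finset.sum_congr rfl fun i _ => by ring
    rw [hexp] at hnoise
    rw [integral_add (f := fun ω => (∑ i, (g ω i) ^ 2) - (∑ i, 2 * gbar i * g ω i))
        (g := fun _ => ∑ i, (gbar i) ^ 2) (hint2.sub hintgg) (integrable_const _),
      integral_sub (f := fun ω => ∑ i, (g ω i) ^ 2) (g := fun ω => ∑ i, 2 * gbar i * g ω i)
        hint2 hintgg, h1, integral_const] at hnoise
    simp only [measure_univ, probReal_univ, ENNReal.toReal_one, smul_eq_mul, one_mul] at hnoise
    linarith
  -- Jensen
  have hjensen : Real.sqrt (∑ i, (gbar i) ^ 2) ≤ ∫ ω, Real.sqrt (∑ i, (g ω i) ^ 2) ∂P := by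
    set G : Ω → EuclideanSpace ℝ (Fin db) := fun ω => (WithLp.equiv 2 _).symm (g ω) with hG
    have hnormG : ∀ ω, ‖G ω‖ = Real.sqrt (∑ i, (g ω i) ^ 2) := by
      intro ω
      rw [EuclideanSpace.norm_eq]
      simp [Real.norm_eq_abs, sq_abs, hG]
    have hGmeas : Measurable G := by
      refine (WithLp.measurable_toLp 2 _).comp (measurable_pi_lambda _ ?_)
      intro i
      exact hmeas i
    have hGint : Integrable G P := by
      refine Integrable.mono' (g := fun ω => ((∑ i, (g ω i) ^ 2) + 1) / 2)
        ((hint2.add (integrable_const 1)).div_const 2)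
        hGmeas.aestronglyMeasurable (Filter.Eventually.of_forall fun ω => ?_)
      show ‖G ω‖ ≤ ((∑ i, (g ω i) ^ 2) + 1) / 2
      rw [hnormG ω]
      have h1 : (0:ℝ) ≤ ∑ i, (g ω i) ^ 2 := by positivity
      nlinarith [Real.sq_sqrt h1, Real.sqrt_nonneg (∑ i, (g ω i) ^ 2), sq_nonneg (Real.sqrt (∑ i, (g ω i) ^ 2) - 1)]
    have hcoord : ∀ i, (∫ ω, G ω ∂P) i = gbar i := by
      intro i
      have h2 : (EuclideanSpace.proj i (𝕜 := ℝ)) (∫ ω, G ω ∂P) = gbar i := by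
        rw [← (EuclideanSpace.proj i (𝕜 := ℝ)).integral_comp_comm hGint]
        have : (fun ω => (EuclideanSpace.proj i (𝕜 := ℝ)) (G ω)) = fun ω => g ω i := rfl
        rw [this, hmean]
      exact h2
    have hnint : ‖∫ ω, G ω ∂P‖ = Real.sqrt (∑ i, (gbar i) ^ 2) := by
      rw [EuclideanSpace.norm_eq]
      congr 1
      refine Finset.sum_congr rfl fun i _ => ?_
      rw [hcoord i, Real.norm_eq_abs, sq_abs]
    calc Real.sqrt (∑ i, (gbar i) ^ 2) = ‖∫ ω, G ω ∂P‖ := hnint.symm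
      _ ≤ ∫ ω, ‖G ω‖ ∂P := norm_integral_le_integral_norm G
      _ = ∫ ω, Real.sqrt (∑ i, (g ω i) ^ 2) ∂P :=
          integral_congr_ae (Filter.Eventually.of_forall hnormG)
  -- E X ≥ √b
  have hEX : Real.sqrt b ≤ ∫ ω, X ω ∂P := by
    have hXeq : X = fun ω => Real.sqrt (∑ i, (g ω i) ^ 2) / Real.sqrt db := by
      funext ω
      simp only [hX]
      rw [Real.sqrt_div (by positivity)]
    have hbeq : Real.sqrt b = Real.sqrt (∑ i, (gbar i) ^ 2) / Real.sqrt db := by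
      rw [hb, Real.sqrt_div (by positivity)]
    rw [hXeq, hbeq, integral_div]
    exact div_le_div_of_nonneg_right hjensen (Real.sqrt_nonneg _)
  -- E X² ≤ a²
  have hEXsq : (∫ ω, X ω ^ 2 ∂P) ≤ a ^ 2 := by
    have h3 : (∫ ω, X ω ^ 2 ∂P) = (∫ ω, ∑ i, (g ω i) ^ 2 ∂P) / db := by
      rw [show (fun ω => X ω ^ 2) = fun ω => (∑ i, (g ω i) ^ 2) / db from funext hXsq]
      exact integral_div _ _
    rw [h3, ha, Real.sq_sqrt (by positivity), hb]
    rw [div_add' _ _ _ (ne_of_gt hdb'), div_le_div_iff_of_pos_right hdb']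
    linarith
  -- a ≤ √b + σ
  have haub : a ≤ Real.sqrt b + σ := by
    have h1 : b + σ ^ 2 ≤ (Real.sqrt b + σ) ^ 2 := by
      nlinarith [Real.sq_sqrt hbnn, Real.sqrt_nonneg b]
    have h2 := Real.sqrt_le_sqrt h1
    rwa [Real.sqrt_sq (by positivity)] at h2
  -- expand and finish
  have hexpand : (∫ ω, (a - X ω) ^ 2 ∂P)
      = a ^ 2 - 2 * a * (∫ ω, X ω ∂P) + ∫ ω, X ω ^ 2 ∂P := by
    have h4 : (fun ω => (a - X ω) ^ 2)
        = fun ω => (a ^ 2 - 2 * a * X ω) + X ω ^ 2 := by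
      funext ω; ring
    rw [h4, integral_add (f := fun ω => a ^ 2 - 2 * a * X ω) (g := fun ω => X ω ^ 2)
        ((integrable_const _).sub (hintX.const_mul _)) hintXsq,
      integral_sub (f := fun _ => a ^ 2) (g := fun ω => 2 * a * X ω)
        (integrable_const _) (hintX.const_mul _), integral_const, integral_const_mul]
    simp [measure_univ]
  calc (∫ ω, (a - X ω) ^ 2 ∂P)
      = a ^ 2 - 2 * a * (∫ ω, X ω ∂P) + ∫ ω, X ω ^ 2 ∂P := hexpand
    _ ≤ a ^ 2 - 2 * a * Real.sqrt b + a ^ 2 := by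
        have h5 := mul_le_mul_of_nonneg_left hEX (by positivity : (0:ℝ) ≤ 2 * a)
        linarith [hEXsq]
    _ = 2 * a * (a - Real.sqrt b) := by ring
    _ ≤ 2 * a * σ := by
        apply mul_le_mul_of_nonneg_left _ (by positivity)
        linarith
    _ = 2 * σ * a := by ring
end
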